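/- Let D be a 3-coloured tournament in which every vertex is incident with edges of at most two of the three colours, D contains no T_3, no vertex of D monochromatically dominates every other vertex of D, and every proper nonempty subset U of the vertices of D spans a subtournament containing a vertex that monochromatically dominates every other vertex of U within that subtournament. Then D has a directed Hamilton cycle C such that each vertex monochromatically dominates every vertex of D other than itself and its predecessor on C, and no vertex monochromatically dominates its predecessor on C. -/

import Mathlib

/-- A 3-coloured tournament on vertex type `V`: between any two distinct
vertices there is exactly one directed edge (`beats`), and `colour x y` gives
the colour (one of three: red, blue, green) of the edge from `x` to `y`
(meaningful when `beats x y` holds). -/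
structure CTournament (V : Type*) where
  beats : V → V → Prop
  irrefl : ∀ v, ¬ beats v v
  asymm : ∀ v w, beats v w → ¬ beats w v
  total : ∀ v w, v ≠ w → beats v w ∨ beats w v
  colour : V → V → Fin 3

namespace CTournament

/-- The colour red. -/
def red : Fin 3 := 0
/-- The colour blue. -/
def blue : Fin 3 := 1
/-- The colour green. -/
def green : Fin 3 := 2

variable {V : Type*} (T : CTournament V)

/-- `x` monochromatically dominates `y` in colour `c`: there is a directed
path (with at least one edge) from `x` to `y` all of whose edges have
colour `c`. -/
def Dom (c : Fin 3) (x y : V) : Prop :=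
  Relation.TransGen (fun a b => T.beats a b ∧ T.colour a b = c) x y

/-- `x` monochromatically dominates `y` (in some colour). -/
def MDom (x y : V) : Prop := ∃ c, T.Dom c x y

/-- `x` monochromatically dominates `y` in colour `c` within the
subtournament induced on the vertex set `S`. -/
def DomIn (S : Set V) (c : Fin 3) (x y : V) : Prop :=
  Relation.TransGen (fun a b => a ∈ S ∧ b ∈ S ∧ T.beats a b ∧ T.colour a b = c) x y

/-- `x` monochromatically dominates `y` within the subtournament induced on `S`. -/
def MDomIn (S : Set V) (x y : V) : Prop := ∃ c, T.DomIn S c x y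

/-- `T` contains a `T_3`: three vertices spanning a cyclic triangle whose
three edges have three pairwise distinct colours. -/
def HasT3 : Prop :=
  ∃ a b c : V, T.beats a b ∧ T.beats b c ∧ T.beats c a ∧
    T.colour a b ≠ T.colour b c ∧ T.colour b c ≠ T.colour c a ∧
    T.colour a b ≠ T.colour c a

/-- Vertex `v` is incident with an edge of colour `c`. -/
def IncidentColour (v : V) (c : Fin 3) : Prop :=
  ∃ w, (T.beats v w ∧ T.colour v w = c) ∨ (T.beats w v ∧ T.colour w v = c)

/-- `T` is a minimal counterexample: it contains no `T_3`, no vertex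
monochromatically dominates every other vertex, and every proper nonempty
subset of the vertices spans a subtournament containing a vertex that
monochromatically dominates (within that subtournament) every other vertex
of the subset. -/
def MinimalCex : Prop :=
  ¬ T.HasT3 ∧
  (¬ ∃ x : V, ∀ y, y ≠ x → T.MDom x y) ∧
  ∀ S : Set V, S.Nonempty → S ≠ Set.univ →
    ∃ x ∈ S, ∀ y ∈ S, y ≠ x → T.MDomIn S x y

/-- The permutation `σ` (sending every vertex to its successor) is a directed
Hamilton cycle of `T`: every vertex beats its successor, and all vertices lie
on a single cycle of `σ`. -/
def IsHamCycle (σ : Equiv.Perm V) : Prop :=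
  (∀ v, T.beats v (σ v)) ∧ ∀ v w : V, ∃ n : ℕ, (⇑σ)^[n] v = w

/-- The domination property of the Hamilton cycle `σ`: every vertex
monochromatically dominates every vertex other than itself and its
predecessor on the cycle, and no vertex monochromatically dominates its
predecessor. -/
def HamDomProp (σ : Equiv.Perm V) : Prop :=
  (∀ x y : V, y ≠ x → y ≠ σ.symm x → T.MDom x y) ∧
  ∀ x : V, ¬ T.MDom x (σ.symm x)

/-- The vertex set of the directed subpath `xCy` of the Hamilton cycle whose
successor permutation is `σ`: all vertices reachable from `x` along the cycle
no later than the first visit of `y`. -/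
def PathSet (σ : Equiv.Perm V) (x y : V) : Set V :=
  {z | ∃ k : ℕ, (⇑σ)^[k] x = z ∧ ∀ j < k, (⇑σ)^[j] x ≠ y}

/-- `R^+(x)`: the vertices to which `x` sends a red edge. -/
def Rplus (x : V) : Set V := {v | T.beats x v ∧ T.colour x v = red}
/-- `R^-(x)`: the vertices from which `x` receives a red edge. -/
def Rminus (x : V) : Set V := {v | T.beats v x ∧ T.colour v x = red}
/-- `B^+(x)`: the vertices to which `x` sends a blue edge. -/
def Bplus (x : V) : Set V := {v | T.beats x v ∧ T.colour x v = blue}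
/-- `B^-(x)`: the vertices from which `x` receives a blue edge. -/
def Bminus (x : V) : Set V := {v | T.beats v x ∧ T.colour v x = blue}
/-- `R_r^+(x) = {v ∈ R^+(x) : v monochromatically dominates x in red}`. -/
def Rrplus (x : V) : Set V := {v ∈ T.Rplus x | T.Dom red v x}
/-- `R_r^-(x) = {v ∈ R^-(x) : x monochromatically dominates v in red}`. -/
def Rrminus (x : V) : Set V := {v ∈ T.Rminus x | T.Dom red x v}
/-- `B_b^+(x) = {v ∈ B^+(x) : v monochromatically dominates x in blue}`. -/
def Bbplus (x : V) : Set V := {v ∈ T.Bplus x | T.Dom blue v x}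
/-- `B_b^-(x) = {v ∈ B^-(x) : x monochromatically dominates v in blue}`. -/
def Bbminus (x : V) : Set V := {v ∈ T.Bminus x | T.Dom blue x v}

end CTournament

/-!
Deleting a vertex `v` leaves a proper subtournament, which has a vertex `x` dominating it. Then
`x` cannot dominate `v`, for otherwise it would dominate all of `D`; in particular `v → x`. Call
such an `x` a successor of `v`. A proper nonempty vertex set `S` never contains a successor of each
of its vertices: the vertex dominating `S` would then dominate its own predecessor in `S`. For a
self-map of a finite set with this property, the set of periodic points and then every orbit must be
the whole set, so the successor map is a cyclic permutation, i.e. a Hamilton cycle.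
-/

open Set Function

theorem Function.periodicPts_nonempty {α : Type*} [Finite α] [Nonempty α] (f : α → α) :
    (periodicPts f).Nonempty := by
  obtain ⟨m, n, hne, heq⟩ := Finite.exists_ne_map_eq_of_infinite (f^[·] (Classical.arbitrary α))
  wlog hlt : m < n generalizing m n
  · exact this n m hne.symm heq.symm (by omega)
  refine ⟨_, mk_mem_periodicPts (Nat.sub_pos_of_lt hlt) (x := f^[m] (Classical.arbitrary α)) ?_⟩
  rw [IsPeriodicPt, IsFixedPt, ← iterate_add_apply, Nat.sub_add_cancel hlt.le]
  exact heq.symm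

theorem Function.range_iterate_subset_image {α : Type*} {f : α → α} {x : α}
    (hx : x ∈ periodicPts f) : range (f^[·] x) ⊆ f '' range (f^[·] x) := by
  rintro _ ⟨k, rfl⟩
  obtain ⟨n, hn, hper⟩ := mem_periodicPts.mp hx
  refine ⟨f^[n - 1 + k] x, ⟨_, rfl⟩, ?_⟩
  rw [← iterate_succ_apply' f, Nat.succ_eq_add_one, ← add_right_comm, Nat.sub_add_cancel hn,
    iterate_add_apply, (hper.apply_iterate k).eq]

theorem Function.bijective_and_exists_iterate_eq_of_not_subset_image {α : Type*} [Finite α]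
    (f : α → α) (h : ∀ S : Set α, S.Nonempty → S ≠ univ → ¬ S ⊆ f '' S) :
    Bijective f ∧ ∀ x y, ∃ n, f^[n] x = y := by
  cases isEmpty_or_nonempty α with
  | inl _ => exact ⟨⟨isEmptyElim, isEmptyElim⟩, isEmptyElim⟩
  | inr _ =>
    have hper : periodicPts f = univ := by
      by_contra hne
      exact h _ (periodicPts_nonempty f) hne (bijOn_periodicPts f).image_eq.symm.subset
    refine ⟨Finite.injective_iff_bijective.mp (injective_iff_periodicPts_eq_univ.mpr hper),
      fun x y => ?_⟩
    have horbit : range (f^[·] x) = univ := by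
      by_contra hne
      exact h (range (f^[·] x)) ⟨x, 0, rfl⟩ hne (range_iterate_subset_image (hper ▸ mem_univ x))
    exact eq_univ_iff_forall.mp horbit y

namespace CTournament

variable {V : Type*} {T : CTournament V}

theorem ne_of_beats {x y : V} (h : T.beats x y) : x ≠ y :=
  fun hxy => T.irrefl x (hxy ▸ h)

theorem beats_of_not_mdom {x y : V} (hne : x ≠ y) (h : ¬ T.MDom x y) : T.beats y x :=
  (T.total y x hne.symm).resolve_right fun hxy => h ⟨_, .single ⟨hxy, rfl⟩⟩

theorem MDomIn.mdom {S : Set V} {x y : V} (h : T.MDomIn S x y) : T.MDom x y :=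
  let ⟨c, hc⟩ := h
  ⟨c, Relation.TransGen.mono (fun _ _ hab => ⟨hab.2.2.1, hab.2.2.2⟩) _ _ hc⟩

theorem exists_successor (hdom : ¬ ∃ x : V, ∀ y, y ≠ x → T.MDom x y)
    (hmin : ∀ S : Set V, S.Nonempty → S ≠ univ → ∃ x ∈ S, ∀ y ∈ S, y ≠ x → T.MDomIn S x y)
    (v : V) : ∃ x, T.beats v x ∧ ¬ T.MDom x v ∧ ∀ y, y ≠ v → y ≠ x → T.MDom x y := by
  obtain ⟨y₀, hy₀⟩ : ∃ y₀, y₀ ≠ v := by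
    by_contra! h
    exact hdom ⟨v, fun y hy => (hy (h y)).elim⟩
  obtain ⟨x, hxv, hx⟩ := hmin {v}ᶜ ⟨y₀, hy₀⟩ (compl_ne_univ.mpr (singleton_nonempty v))
  have hxdom : ∀ y, y ≠ v → y ≠ x → T.MDom x y := fun y hyv hyx => (hx y hyv hyx).mdom
  have hxv' : ¬ T.MDom x v := fun h =>
    hdom ⟨x, fun y hyx => (eq_or_ne y v).elim (· ▸ h) (hxdom y · hyx)⟩
  exact ⟨x, beats_of_not_mdom hxv hxv', hxv', hxdom⟩

theorem not_subset_image_of_beats_of_not_mdom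
    (hmin : ∀ S : Set V, S.Nonempty → S ≠ univ → ∃ x ∈ S, ∀ y ∈ S, y ≠ x → T.MDomIn S x y)
    {f : V → V} (hbeats : ∀ v, T.beats v (f v)) (hnd : ∀ v, ¬ T.MDom (f v) v)
    {S : Set V} (hS : S.Nonempty) (hSu : S ≠ univ) : ¬ S ⊆ f '' S := by
  intro hsub
  obtain ⟨x, hxS, hx⟩ := hmin S hS hSu
  obtain ⟨y, hyS, rfl⟩ := hsub hxS
  exact hnd y (hx y hyS (ne_of_beats (hbeats y))).mdom

end CTournament

theorem hamilton_of_counterexample_general {V : Type*} [Fintype V] (T : CTournament V)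
    (hdom : ¬ ∃ x : V, ∀ y, y ≠ x → T.MDom x y)
    (hmin : ∀ S : Set V, S.Nonempty → S ≠ Set.univ →
      ∃ x ∈ S, ∀ y ∈ S, y ≠ x → T.MDomIn S x y) :
    ∃ σ : Equiv.Perm V, T.IsHamCycle σ ∧ T.HamDomProp σ := by
  choose f hbeats hnd hfdom using CTournament.exists_successor hdom hmin
  obtain ⟨hbij, horbit⟩ := bijective_and_exists_iterate_eq_of_not_subset_image f
    fun _ hS hSu => CTournament.not_subset_image_of_beats_of_not_mdom hmin hbeats hnd hS hSu
  let σ := Equiv.ofBijective f hbij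
  refine ⟨σ, ⟨hbeats, horbit⟩, fun x y hyx hy => ?_, fun x => ?_⟩ <;>
    obtain ⟨v, rfl⟩ := σ.surjective x <;> rw [σ.symm_apply_apply] at *
  · exact hfdom v y hy hyx
  · exact hnd v

/-- If `D` is a 3-coloured tournament in which every vertex is
incident with at most two of the three colours, which contains no `T_3`, in which
no vertex monochromatically dominates every other vertex, and every proper
nonempty vertex subset spans a subtournament with a vertex dominating it, then
`D` has a directed Hamilton cycle with the stated domination property. -/
theorem hamilton_of_counterexample {V : Type*} [Fintype V] (T : CTournament V)
    (hcol : ∀ v : V, ∃ c : Fin 3, ¬ T.IncidentColour v c)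
    (hT3 : ¬ T.HasT3)
    (hdom : ¬ ∃ x : V, ∀ y, y ≠ x → T.MDom x y)
    (hmin : ∀ S : Set V, S.Nonempty → S ≠ Set.univ →
      ∃ x ∈ S, ∀ y ∈ S, y ≠ x → T.MDomIn S x y) :
    ∃ σ : Equiv.Perm V, T.IsHamCycle σ ∧ T.HamDomProp σ :=
  hamilton_of_counterexample_general T hdom hmin
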